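/- arXiv:1803.08602 — 2 statements merged into one kernel-verified Lean document; each statement's English description precedes it below -/
import Mathlib

section
/- Let n be a positive integer, γ > 0, and let s, t ∈ ℝ^n have all entries nonnegative. If ∑_{i=1}^n (t_i + γ)/(s_i + γ) ≤ n (equivalently, ∑_i t_i/(s_i + γ) ≤ ∑_i s_i/(s_i + γ)) and t ≠ s, then ∑_{i=1}^n log(t_i + γ) < ∑_{i=1}^n log(s_i + γ). -/
/-!
Put `r i = (t i + γ) / (s i + γ)`. Then `∑ log (t i + γ) - ∑ log (s i + γ) = ∑ log (r i)`, and
`log x ≤ x - 1` with equality only at `x = 1` gives `∑ log (r i) < ∑ (r i - 1) ≤ 0` as soon as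
some `r i ≠ 1`, that is, as soon as `t ≠ s`.
-/

open Finset Real

lemma sum_log_lt_sum_sub_one {ι : Type*} [Fintype ι] {r : ι → ℝ} (hr : ∀ i, 0 < r i)
    (hne : r ≠ 1) : ∑ i, log (r i) < ∑ i, (r i - 1) := by
  obtain ⟨j, hj⟩ := Function.ne_iff.mp hne
  exact sum_lt_sum (fun i _ => log_le_sub_one_of_pos (hr i))
    ⟨j, mem_univ j, log_lt_sub_one_of_pos (hr j) hj⟩

lemma sum_log_lt_sum_log_of_sum_div_le_card {ι : Type*} [Fintype ι] {a b : ι → ℝ}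
    (ha : ∀ i, 0 < a i) (hb : ∀ i, 0 < b i) (hsum : ∑ i, b i / a i ≤ Fintype.card ι)
    (hne : b ≠ a) : ∑ i, log (b i) < ∑ i, log (a i) := by
  have hratio : (fun i => b i / a i) ≠ 1 := fun h =>
    hne (funext fun i => (div_eq_one_iff_eq (ha i).ne').mp (congrFun h i))
  have hlog : ∑ i, log (b i / a i) = ∑ i, log (b i) - ∑ i, log (a i) := by
    rw [← sum_sub_distrib]
    exact sum_congr rfl fun i _ => log_div (hb i).ne' (ha i).ne'
  have hlin : ∑ i, (b i / a i - 1) ≤ 0 := by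
    simpa [sum_sub_distrib] using hsum
  linarith [sum_log_lt_sum_sub_one (fun i => div_pos (hb i) (ha i)) hratio]

theorem log_surrogate_strict_descent_general
    (n : ℕ) (γ : ℝ) (hγ : 0 < γ)
    (s t : Fin n → ℝ) (hs : ∀ i, 0 ≤ s i) (ht : ∀ i, 0 ≤ t i)
    (hsum : ∑ i, (t i + γ) / (s i + γ) ≤ (n : ℝ))
    (hne : t ≠ s) :
    ∑ i, Real.log (t i + γ) < ∑ i, Real.log (s i + γ) := by
  refine sum_log_lt_sum_log_of_sum_div_le_card (fun i => by linarith [hs i])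
    (fun i => by linarith [ht i]) (by simpa using hsum) fun h => hne ?_
  funext i
  simpa using congrFun h i

/-- Strict descent for the log surrogate: if `∑ (t_i + γ)/(s_i + γ) ≤ n` and `t ≠ s`, then
`∑ log(t_i + γ) < ∑ log(s_i + γ)`. -/
theorem log_surrogate_strict_descent
    (n : ℕ) (hn : 0 < n) (γ : ℝ) (hγ : 0 < γ)
    (s t : Fin n → ℝ) (hs : ∀ i, 0 ≤ s i) (ht : ∀ i, 0 ≤ t i)
    (hsum : ∑ i, (t i + γ) / (s i + γ) ≤ (n : ℝ))
    (hne : t ≠ s) :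
    ∑ i, Real.log (t i + γ) < ∑ i, Real.log (s i + γ) :=
  log_surrogate_strict_descent_general n γ hγ s t hs ht hsum hne
end

section
/- Let n be a positive integer, γ > 0, and let C ⊆ {s ∈ ℝ^n : s_i ≥ 0 for all i} be a nonempty compact convex set. Define a sequence by choosing s^{(0)} ∈ C and, for each l ≥ 0, choosing s^{(l+1)} ∈ C to be a minimizer over C of the linearized objective s ↦ ∑_{i=1}^n s_i/(s_i^{(l)} + γ). Then: (a) the sequence of objective values L(s^{(l)}) = ∑_{i=1}^n log(s_i^{(l)} + γ) is non-increasing and converges; and (b) there exists a convergent subsequence of (s^{(l)}) whose limit s̄ ∈ C is a stationary point of L on C, i.e. ∑_{i=1}^n s̄_i/(s̄_i + γ) ≤ ∑_{i=1}^n s_i/(s̄_i + γ) for all s ∈ C. -/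
/-!
The surrogate `L(s) = ∑ log (s i + γ)` is concave, so it lies below its linearization at the
current iterate. Since the next iterate minimizes that linearization over `C`, which contains the
current iterate, each step decreases `L`; and `L ≥ n log γ` on the orthant, so the values converge.
Along a convergent subsequence the decrease `L(s^{(l+1)}) - L(s^{(l)})` tends to `0`, while it is
bounded by the gap between the linearization at `s^{(l)}` evaluated at any `s ∈ C` and at
`s^{(l)}` itself. Passing to the limit, that gap is nonnegative at the limit point.
-/

open Filter Topology

lemma log_sub_log_le_sub_div {a b : ℝ} (ha : 0 < a) (hb : 0 < b) :
    Real.log b - Real.log a ≤ (b - a) / a := by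
  calc Real.log b - Real.log a = Real.log (b / a) := (Real.log_div hb.ne' ha.ne').symm
    _ ≤ b / a - 1 := Real.log_le_sub_one_of_pos (div_pos hb ha)
    _ = (b - a) / a := by field_simp

namespace Reweighted

variable {ι : Type*} [Fintype ι]

noncomputable def logSurrogate (γ : ℝ) (s : ι → ℝ) : ℝ := ∑ i, Real.log (s i + γ)

/-- The linearization of `logSurrogate γ` at `a`, up to an additive constant: the weighted sum
with weights `(aᵢ + γ)⁻¹`. -/
noncomputable def linearizedCost (γ : ℝ) (a s : ι → ℝ) : ℝ := ∑ i, s i / (a i + γ)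

lemma logSurrogate_sub_le_linearizedCost_sub {γ : ℝ} (hγ : 0 < γ) {a t : ι → ℝ}
    (ha : ∀ i, 0 ≤ a i) (ht : ∀ i, 0 ≤ t i) :
    logSurrogate γ t - logSurrogate γ a ≤ linearizedCost γ a t - linearizedCost γ a a := by
  simp only [logSurrogate, linearizedCost, ← Finset.sum_sub_distrib]
  refine Finset.sum_le_sum fun i _ => ?_
  calc Real.log (t i + γ) - Real.log (a i + γ) ≤ (t i + γ - (a i + γ)) / (a i + γ) :=
        log_sub_log_le_sub_div (by linarith [ha i]) (by linarith [ht i])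
    _ = t i / (a i + γ) - a i / (a i + γ) := by ring

lemma card_mul_log_le_logSurrogate {γ : ℝ} (hγ : 0 < γ) {s : ι → ℝ} (hs : ∀ i, 0 ≤ s i) :
    Fintype.card ι * Real.log γ ≤ logSurrogate γ s := by
  rw [← nsmul_eq_mul]
  exact Finset.card_nsmul_le_sum _ _ _ fun i _ =>
    Real.log_le_log hγ (le_add_of_nonneg_left (hs i))

lemma _root_.Filter.Tendsto.linearizedCost {α : Type*} {l : Filter α} {γ : ℝ}
    {f g : α → ι → ℝ} {a t : ι → ℝ} (hf : Tendsto f l (𝓝 a)) (hg : Tendsto g l (𝓝 t))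
    (ha : ∀ i, a i + γ ≠ 0) :
    Tendsto (fun x => linearizedCost γ (f x) (g x)) l (𝓝 (linearizedCost γ a t)) :=
  tendsto_finsetSum _ fun i _ =>
    ((continuous_apply i).tendsto t |>.comp hg).div
      ((((continuous_apply i).tendsto a).comp hf).add_const γ) (ha i)

lemma linearizedCost_le_of_tendsto {γ : ℝ} {x : ℕ → ι → ℝ} {s xbar : ι → ℝ} {c : ℝ}
    {φ : ℕ → ℕ} (hφ : StrictMono φ) (hxbar : ∀ i, xbar i + γ ≠ 0)
    (hsub : Tendsto (x ∘ φ) atTop (𝓝 xbar))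
    (hL : Tendsto (fun l => logSurrogate γ (x l)) atTop (𝓝 c))
    (hstep : ∀ l, logSurrogate γ (x (l + 1)) - logSurrogate γ (x l) ≤
      linearizedCost γ (x l) s - linearizedCost γ (x l) (x l)) :
    linearizedCost γ xbar xbar ≤ linearizedCost γ xbar s := by
  have hdecrease : Tendsto (fun l => logSurrogate γ (x (φ l + 1)) - logSurrogate γ (x (φ l)))
      atTop (𝓝 0) := by
    have hφ_top := hφ.tendsto_atTop
    simpa using (hL.comp (tendsto_add_atTop_nat 1 |>.comp hφ_top)).sub (hL.comp hφ_top)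
  have hgap : Tendsto
      (fun l => linearizedCost γ (x (φ l)) s - linearizedCost γ (x (φ l)) (x (φ l)))
      atTop (𝓝 (linearizedCost γ xbar s - linearizedCost γ xbar xbar)) :=
    (hsub.linearizedCost tendsto_const_nhds hxbar).sub (hsub.linearizedCost hsub hxbar)
  linarith [le_of_tendsto_of_tendsto' hdecrease hgap fun l => hstep (φ l)]

end Reweighted

open Reweighted in
theorem reweighted_algorithm_convergence_general
    (n : ℕ) (γ : ℝ) (hγ : 0 < γ)
    (C : Set (Fin n → ℝ)) (hCnonneg : ∀ s ∈ C, ∀ i, 0 ≤ s i)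
    (hCcompact : IsCompact C)
    (seq : ℕ → (Fin n → ℝ)) (h0 : seq 0 ∈ C)
    (hmem : ∀ l, seq (l + 1) ∈ C)
    (hmin : ∀ l, ∀ s ∈ C,
      ∑ i, seq (l + 1) i / (seq l i + γ) ≤ ∑ i, s i / (seq l i + γ)) :
    (Antitone fun l => ∑ i, Real.log (seq l i + γ)) ∧
    (∃ c : ℝ, Filter.Tendsto (fun l => ∑ i, Real.log (seq l i + γ))
        Filter.atTop (nhds c)) ∧
    (∃ (φ : ℕ → ℕ) (sbar : Fin n → ℝ), StrictMono φ ∧ sbar ∈ C ∧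
      Filter.Tendsto (fun l => seq (φ l)) Filter.atTop (nhds sbar) ∧
      ∀ s ∈ C, ∑ i, sbar i / (sbar i + γ) ≤ ∑ i, s i / (sbar i + γ)) := by
  have hseqC : ∀ l, seq l ∈ C := fun l => l.casesOn h0 hmem
  have hstep : ∀ l, ∀ s ∈ C, logSurrogate γ (seq (l + 1)) - logSurrogate γ (seq l) ≤
      linearizedCost γ (seq l) s - linearizedCost γ (seq l) (seq l) := fun l s hs =>
    (logSurrogate_sub_le_linearizedCost_sub hγ (hCnonneg _ (hseqC l)) (hCnonneg _ (hmem l))).trans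
      (sub_le_sub_right (hmin l s hs) _)
  have hanti : Antitone fun l => logSurrogate γ (seq l) :=
    antitone_nat_of_succ_le fun l => by linarith [hstep l _ (hseqC l)]
  have hbdd : BddBelow (Set.range fun l => logSurrogate γ (seq l)) :=
    ⟨_, Set.forall_mem_range.2 fun l => card_mul_log_le_logSurrogate hγ (hCnonneg _ (hseqC l))⟩
  have hconv := tendsto_atTop_ciInf hanti hbdd
  obtain ⟨sbar, hsbarC, φ, hφ, hsub⟩ := hCcompact.tendsto_subseq hseqC
  refine ⟨hanti, ⟨_, hconv⟩, φ, sbar, hφ, hsbarC, hsub, fun s hs => ?_⟩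
  have hsbar : ∀ i, sbar i + γ ≠ 0 := fun i =>
    (add_pos_of_nonneg_of_pos (hCnonneg _ hsbarC i) hγ).ne'
  exact linearizedCost_le_of_tendsto hφ hsbar hsub hconv fun l => hstep l s hs

/-- Convergence of the iteratively reweighted algorithm: along iterates that minimize the
linearized objective over a nonempty compact convex subset `C` of the nonnegative orthant,
(a) the surrogate values `L(s^{(l)}) = ∑ log(s_i^{(l)} + γ)` are non-increasing and converge, and
(b) some subsequence of the iterates converges to a stationary point of `L` on `C`. -/
theorem reweighted_algorithm_convergence
    (n : ℕ) (hn : 0 < n) (γ : ℝ) (hγ : 0 < γ)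
    (C : Set (Fin n → ℝ)) (hCnonneg : ∀ s ∈ C, ∀ i, 0 ≤ s i)
    (hCne : C.Nonempty) (hCcompact : IsCompact C) (hCconvex : Convex ℝ C)
    (seq : ℕ → (Fin n → ℝ)) (h0 : seq 0 ∈ C)
    (hmem : ∀ l, seq (l + 1) ∈ C)
    (hmin : ∀ l, ∀ s ∈ C,
      ∑ i, seq (l + 1) i / (seq l i + γ) ≤ ∑ i, s i / (seq l i + γ)) :
    (Antitone fun l => ∑ i, Real.log (seq l i + γ)) ∧
    (∃ c : ℝ, Filter.Tendsto (fun l => ∑ i, Real.log (seq l i + γ))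
        Filter.atTop (nhds c)) ∧
    (∃ (φ : ℕ → ℕ) (sbar : Fin n → ℝ), StrictMono φ ∧ sbar ∈ C ∧
      Filter.Tendsto (fun l => seq (φ l)) Filter.atTop (nhds sbar) ∧
      ∀ s ∈ C, ∑ i, sbar i / (sbar i + γ) ≤ ∑ i, s i / (sbar i + γ)) :=
  reweighted_algorithm_convergence_general n γ hγ C hCnonneg hCcompact seq h0 hmem hmin
end
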